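/- arXiv:1809.05028 — 2 statements merged into one kernel-verified Lean document; each statement's English description precedes it below -/
import Mathlib

section
/- Let r ≥ ℓ−1 ≥ 1 and let k_1, …, k_r be positive integers. The extremal number ex(K_{k_1, …, k_r}, K_ℓ) — the maximum number of edges of a K_ℓ-free subgraph of the complete multipartite graph K_{k_1, …, k_r} — is equal to the maximum, over all partitions 𝒫 of the index set [r] into ℓ−1 (possibly empty) sets, of Σ_{P ≠ P' ∈ 𝒫} k_P · k_{P'}, where k_P := Σ_{i ∈ P} k_i and the sum is over unordered pairs of distinct parts of 𝒫. -/
/-!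
Averaging over the transversals `σ` (one vertex `σ i` from every part) writes twice the number of
edges of `G` as the mean of the weighted sums `∑_{ij ∈ R_σ} k_i k_j` over ordered edges of the
graphs `R_σ` that `G` induces on the transversals; each `R_σ` is `K_ℓ`-free. A weighted Turán
theorem bounds every such sum by that of a complete `(ℓ - 1)`-partite graph on the indices, by
Erdős's argument: take a vertex `v` of maximal weighted degree, recurse into its neighbourhood,
which is `K_{ℓ-1}`-free, and put all non-neighbours of `v` into one new part. Blowing up an optimal
partition gives a `K_ℓ`-free subgraph attaining the bound.
-/

open Finset

namespace SimpleGraph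

variable {V W : Type*} [Fintype V]

open Classical in
noncomputable def weightedDegree (G : SimpleGraph V) (w : V → ℕ) (v : V) : ℕ :=
  ∑ u, if G.Adj v u then w u else 0

open Classical in
noncomputable def weightedAdjSum (G : SimpleGraph V) (w : V → ℕ) : ℕ :=
  ∑ u, ∑ v, if G.Adj u v then w u * w v else 0

lemma weightedAdjSum_one (G : SimpleGraph V) : G.weightedAdjSum 1 = 2 * G.edgeSet.ncard := by
  classical
  rw [← coe_edgeFinset, Set.ncard_coe_finset, ← sum_degrees_eq_twice_card_edges]
  refine sum_congr rfl fun u _ => ?_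
  rw [← card_neighborFinset_eq_degree, neighborFinset_eq_filter]
  simp

lemma sum_comp_mul_eq_sum_mul_sum_fiber [Fintype W] [DecidableEq W] (g : V → W) (f : W → ℕ)
    (w : V → ℕ) : ∑ v, f (g v) * w v = ∑ P, f P * ∑ v with g v = P, w v := by
  simp_rw [mul_sum]
  rw [← sum_fiberwise univ g]
  refine sum_congr rfl fun P _ => sum_congr rfl fun v hv => ?_
  rw [(mem_filter.1 hv).2]

lemma sum_sum_comp_mul_eq_sum_sum_mul_fiber [Fintype W] [DecidableEq W] (g : V → W)
    (f : W → W → ℕ) (w : V → ℕ) :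
    ∑ u, ∑ v, f (g u) (g v) * (w u * w v)
      = ∑ P, ∑ Q, f P Q * ((∑ u with g u = P, w u) * ∑ v with g v = Q, w v) := by
  calc ∑ u, ∑ v, f (g u) (g v) * (w u * w v)
      = ∑ u, (∑ Q, f (g u) Q * ∑ v with g v = Q, w v) * w u := by
        simp_rw [← sum_comp_mul_eq_sum_mul_sum_fiber, sum_mul]
        exact sum_congr rfl fun _ _ => sum_congr rfl fun _ _ => by ring
    _ = ∑ P, (∑ Q, f P Q * ∑ v with g v = Q, w v) * ∑ u with g u = P, w u :=
        sum_comp_mul_eq_sum_mul_sum_fiber g (fun P => ∑ Q, f P Q * ∑ v with g v = Q, w v) w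
    _ = _ := sum_congr rfl fun P _ => by
        rw [sum_mul]
        exact sum_congr rfl fun _ _ => by ring

lemma weightedAdjSum_comap [Fintype W] [DecidableEq W] (H : SimpleGraph W) (g : V → W)
    (w : V → ℕ) :
    (H.comap g).weightedAdjSum w = H.weightedAdjSum (fun P => ∑ v with g v = P, w v) := by
  classical
  simpa [weightedAdjSum, boole_mul] using
    sum_sum_comp_mul_eq_sum_sum_mul_fiber g (fun P Q => if H.Adj P Q then 1 else 0) w

lemma sum_sum_ne_eq_two_mul_sum_sum_lt [Fintype W] [LinearOrder W] (f : W → W → ℕ)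
    (hf : ∀ P Q, f P Q = f Q P) :
    ∑ P, ∑ Q, (if P ≠ Q then f P Q else 0) = 2 * ∑ P, ∑ Q, if P < Q then f P Q else 0 := by
  have split (P Q : W) : (if P ≠ Q then f P Q else 0)
      = (if P < Q then f P Q else 0) + (if Q < P then f Q P else 0) := by
    rcases lt_trichotomy P Q with h | rfl | h
    · simp [h, h.ne, h.not_gt]
    · simp
    · simp [h, h.ne', h.not_gt, hf]
  simp only [split, sum_add_distrib]
  rw [sum_comm (f := fun P Q => if Q < P then f Q P else 0)]
  ring

lemma weightedAdjSum_top [Fintype W] [LinearOrder W] (x : W → ℕ) :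
    (⊤ : SimpleGraph W).weightedAdjSum x = 2 * ∑ P, ∑ Q, if P < Q then x P * x Q else 0 := by
  rw [← sum_sum_ne_eq_two_mul_sum_sum_lt _ fun P Q => mul_comm (x P) (x Q)]
  simp [weightedAdjSum]

open Classical in
/-- Each ordered edge with an endpoint `u` outside the neighbourhood of `v` is charged to `u`, whose
weighted degree is at most that of `v`. -/
lemma weightedAdjSum_le_of_isMaxOn (G : SimpleGraph V) {s : Set V} {w : V → ℕ}
    (hw : ∀ u ∉ s, w u = 0) {v : V} (hv : IsMaxOn (G.weightedDegree w) s v) :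
    G.weightedAdjSum w ≤ G.weightedAdjSum (fun u => if G.Adj v u then w u else 0)
      + 2 * (G.weightedDegree w v * ∑ u, if G.Adj v u then 0 else w u) := by
  set X := ∑ u, ∑ u', if G.Adj v u then 0 else if G.Adj u u' then w u * w u' else 0
  have hsplit : G.weightedAdjSum w ≤ G.weightedAdjSum (fun u => if G.Adj v u then w u else 0)
      + (X + ∑ u, ∑ u', if G.Adj v u' then 0 else if G.Adj u u' then w u * w u' else 0) := by
    simp only [weightedAdjSum]
    rw [← sum_add_distrib, ← sum_add_distrib]
    gcongr with u _
    rw [← sum_add_distrib, ← sum_add_distrib]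
    gcongr with u' _
    by_cases hu : G.Adj v u <;> by_cases hu' : G.Adj v u' <;> simp [hu, hu']
  have hsymm :
      ∑ u, ∑ u', (if G.Adj v u' then 0 else if G.Adj u u' then w u * w u' else 0) = X := by
    rw [sum_comm]
    simp only [X, G.adj_comm, mul_comm]
  have hX : X ≤ G.weightedDegree w v * ∑ u, if G.Adj v u then 0 else w u := by
    rw [mul_sum]
    refine sum_le_sum fun u _ => ?_
    by_cases hvu : G.Adj v u
    · simp [hvu]
    · have hdeg : w u * G.weightedDegree w u ≤ w u * G.weightedDegree w v := by
        by_cases hu : u ∈ s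
        · exact Nat.mul_le_mul_left _ (hv hu)
        · simp [hw u hu]
      simpa [hvu, weightedDegree, mul_sum, mul_comm] using hdeg
  omega

lemma weightedAdjSum_comap_top_castSucc_or_last {m : ℕ} (c : V → Fin m) (p : V → Prop)
    [DecidablePred p] (w : V → ℕ) :
    ((⊤ : SimpleGraph (Fin (m + 1))).comap
        (fun u => if p u then (c u).castSucc else Fin.last m)).weightedAdjSum w
      = ((⊤ : SimpleGraph (Fin m)).comap c).weightedAdjSum (fun u => if p u then w u else 0)
        + 2 * ((∑ u, if p u then w u else 0) * ∑ u, if p u then 0 else w u) := by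
  classical
  have hcross : (∑ u, if p u then w u else 0) * (∑ u, if p u then 0 else w u)
      = ∑ u, ∑ u', (if p u then w u else 0) * (if p u' then 0 else w u') := sum_mul_sum ..
  have hcross' : (∑ u, if p u then w u else 0) * (∑ u, if p u then 0 else w u)
      = ∑ u, ∑ u', (if p u then 0 else w u) * (if p u' then w u' else 0) := by
    rw [mul_comm, sum_mul_sum]
  rw [two_mul]
  nth_rw 2 [hcross']
  rw [hcross]
  simp only [weightedAdjSum, ← sum_add_distrib]
  refine sum_congr rfl fun u _ => sum_congr rfl fun u' _ => ?_
  by_cases hu : p u <;> by_cases hu' : p u'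
  · simp [hu, hu', Fin.castSucc_inj]
  · simp [hu, hu', (Fin.castSucc_lt_last (c u)).ne]
  · simp [hu, hu', (Fin.castSucc_lt_last (c u')).ne']
  · simp [hu, hu']

theorem exists_weightedAdjSum_le_comap_top (G : SimpleGraph V) {m : ℕ} (hm : 0 < m)
    {s : Set V} (hs : G.CliqueFreeOn s (m + 1)) {w : V → ℕ} (hw : ∀ u ∉ s, w u = 0) :
    ∃ c : V → Fin m,
      G.weightedAdjSum w ≤ ((⊤ : SimpleGraph (Fin m)).comap c).weightedAdjSum w := by
  classical
  induction m, hm using Nat.le_induction generalizing s w with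
  | base =>
    refine ⟨0, le_of_eq_of_le ?_ (Nat.zero_le _)⟩
    refine sum_eq_zero fun u _ => sum_eq_zero fun u' _ => ite_eq_right_iff.2 fun hadj => ?_
    by_cases hu : u ∈ s
    · by_cases hu' : u' ∈ s
      · exact absurd hadj ((cliqueFreeOn_two G).1 hs hu hu' hadj.ne)
      · simp [hw u' hu']
    · simp [hw u hu]
  | succ m hm ih =>
    rcases s.eq_empty_or_nonempty with rfl | hne
    · obtain rfl : w = 0 := funext fun u => hw u (Set.notMem_empty u)
      exact ⟨0, by simp [weightedAdjSum]⟩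
    obtain ⟨v, hvs, hv⟩ := Set.exists_max_image s (G.weightedDegree w) s.toFinite hne
    obtain ⟨c, hc⟩ := ih (CliqueFreeOn.of_succ G hs hvs)
      (w := fun u => if G.Adj v u then w u else 0) (fun u hu => by
        by_cases hvu : G.Adj v u
        · exact if_pos hvu ▸ hw u fun hus => hu ⟨hus, hvu⟩
        · exact if_neg hvu)
    refine ⟨fun u => if G.Adj v u then (c u).castSucc else Fin.last m, ?_⟩
    rw [weightedAdjSum_comap_top_castSucc_or_last]
    calc G.weightedAdjSum w
        ≤ G.weightedAdjSum (fun u => if G.Adj v u then w u else 0)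
          + 2 * (G.weightedDegree w v * ∑ u, if G.Adj v u then 0 else w u) :=
          G.weightedAdjSum_le_of_isMaxOn hw hv
      _ ≤ _ := add_le_add hc le_rfl

end SimpleGraph

section Transversal

open Function Fintype

variable {ι M : Type*} {β : ι → Type*}

def Sigma.transversal (σ : ∀ i, β i) : ι ↪ Σ i, β i :=
  ⟨fun i => ⟨i, σ i⟩, fun _ _ h => congrArg Sigma.fst h⟩

@[simp]
lemma Sigma.transversal_apply (σ : ∀ i, β i) (i : ι) : Sigma.transversal σ i = ⟨i, σ i⟩ := rfl

variable [Fintype ι] [DecidableEq ι] [∀ i, Fintype (β i)] [AddCommMonoid M]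

/-- `(σ, a) ↦ (update σ i a, σ i)` is a bijection. -/
lemma sum_sum_update_eq_card_nsmul (h : (∀ i, β i) → M) (i : ι) :
    ∑ σ, ∑ a, h (update σ i a) = card (β i) • ∑ σ, h σ := by
  let e : (∀ i, β i) × β i ≃ (∀ i, β i) × β i :=
    { toFun := fun p => (update p.1 i p.2, p.1 i)
      invFun := fun q => (update q.1 i q.2, q.1 i)
      left_inv := fun p => by simp
      right_inv := fun q => by simp }
  calc ∑ σ, ∑ a, h (update σ i a) = ∑ p : (∀ i, β i) × β i, h (e p).1 := by
        rw [Fintype.sum_prod_type]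
        rfl
    _ = ∑ p : (∀ i, β i) × β i, h p.1 := e.sum_comp fun q => h q.1
    _ = _ := by simp [Fintype.sum_prod_type, smul_sum]

lemma card_nsmul_card_nsmul_sum_apply_apply {i j : ι} (hij : i ≠ j) (F : β i → β j → M) :
    card (β i) • card (β j) • ∑ σ : ∀ i, β i, F (σ i) (σ j)
      = card (∀ i, β i) • ∑ a, ∑ b, F a b := by
  rw [← sum_sum_update_eq_card_nsmul _ j, ← sum_sum_update_eq_card_nsmul _ i]
  simp only [update_of_ne hij, update_self, sum_const, card_univ]

end Transversal

namespace SimpleGraph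

open Fintype

variable {ι : Type*} [Fintype ι] {β : ι → Type*} [∀ i, Fintype (β i)]

lemma weightedAdjSum_comap_sigmaFst (H : SimpleGraph ι) :
    (H.comap (Sigma.fst : (Σ i, β i) → ι)).weightedAdjSum 1
      = H.weightedAdjSum fun i => card (β i) := by
  classical
  simp only [weightedAdjSum, comap_adj, Pi.one_apply, mul_one, Fintype.sum_sigma]
  refine sum_congr rfl fun i _ => ?_
  rw [sum_comm]
  refine sum_congr rfl fun j _ => ?_
  split_ifs <;> simp

variable [DecidableEq ι]

/-- Double counting: for `i ≠ j`, the pair `(⟨i, a⟩, ⟨j, b⟩)` lies on the transversal of a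
fraction `1 / (card (β i) * card (β j))` of all maps `σ`. -/
lemma card_pi_mul_weightedAdjSum_one {G : SimpleGraph (Σ i, β i)}
    (hG : G ≤ completeMultipartiteGraph β) :
    card (∀ i, β i) * G.weightedAdjSum 1
      = ∑ σ, (G.comap (Sigma.transversal σ)).weightedAdjSum (fun i => card (β i)) := by
  classical
  simp only [weightedAdjSum, comap_adj, Pi.one_apply, mul_one, Fintype.sum_sigma, mul_sum]
  rw [sum_comm]
  refine sum_congr rfl fun i _ => ?_
  rw [sum_comm]
  conv_rhs => rw [sum_comm]
  refine sum_congr rfl fun j _ => ?_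
  simp only [← mul_sum, Sigma.transversal_apply]
  rcases eq_or_ne i j with rfl | hij
  · have hpart (a b : β i) : ¬ G.Adj ⟨i, a⟩ ⟨i, b⟩ := fun h => by simpa using hG h
    simp [hpart]
  · have hcount := card_nsmul_card_nsmul_sum_apply_apply hij
      fun a b => if G.Adj ⟨i, a⟩ ⟨j, b⟩ then 1 else 0
    simp only [smul_eq_mul] at hcount
    rw [← hcount]
    simp only [mul_sum]
    refine sum_congr rfl fun σ _ => ?_
    by_cases h : G.Adj ⟨i, σ i⟩ ⟨j, σ j⟩ <;> simp [h]

theorem exists_weightedAdjSum_one_le_comap_top [∀ i, Nonempty (β i)]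
    {G : SimpleGraph (Σ i, β i)} (hG : G ≤ completeMultipartiteGraph β) {m : ℕ} (hm : 0 < m)
    (hfree : G.CliqueFree (m + 1)) :
    ∃ c : ι → Fin m, G.weightedAdjSum 1
      ≤ ((⊤ : SimpleGraph (Fin m)).comap c).weightedAdjSum fun i => card (β i) := by
  obtain ⟨σ, -, hσ⟩ := exists_le_of_sum_le (s := univ) univ_nonempty
    (f := fun _ => G.weightedAdjSum 1)
    (g := fun σ => (G.comap (Sigma.transversal σ)).weightedAdjSum fun i => card (β i))
    (by rw [sum_const, card_univ, smul_eq_mul, card_pi_mul_weightedAdjSum_one hG])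
  have hσfree : (G.comap (Sigma.transversal σ)).CliqueFree (m + 1) :=
    hfree.comap (Embedding.comap _ G).isContained
  obtain ⟨c, hc⟩ := exists_weightedAdjSum_le_comap_top _ hm hσfree.cliqueFreeOn
    (s := Set.univ) (w := fun i => card (β i)) fun u hu => absurd (Set.mem_univ u) hu
  exact ⟨c, hσ.trans hc⟩

end SimpleGraph

open SimpleGraph

theorem multipartite_turan_general (r ℓ : ℕ) (hℓ : 2 ≤ ℓ)
    (k : Fin r → ℕ) (hk : ∀ i, 1 ≤ k i) :
    ∃ M : ℕ,
      IsGreatest {m : ℕ | ∃ G : SimpleGraph (Σ i, Fin (k i)),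
        G ≤ SimpleGraph.completeMultipartiteGraph (fun i => Fin (k i)) ∧ G.CliqueFree ℓ ∧
        m = G.edgeSet.ncard} M ∧
      IsGreatest {m : ℕ | ∃ c : Fin r → Fin (ℓ - 1),
        m = ∑ P : Fin (ℓ - 1), ∑ Q : Fin (ℓ - 1), if P < Q then
              (∑ i ∈ Finset.univ.filter (fun i => c i = P), k i) *
              (∑ i ∈ Finset.univ.filter (fun i => c i = Q), k i) else 0} M := by
  set S : (Fin r → Fin (ℓ - 1)) → ℕ := fun c => ∑ P, ∑ Q, if P < Q then
    (∑ i ∈ univ.filter (fun i => c i = P), k i) * (∑ i ∈ univ.filter (fun i => c i = Q), k i)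
      else 0
  have hS (c : Fin r → Fin (ℓ - 1)) :
      ((⊤ : SimpleGraph _).comap c).weightedAdjSum k = 2 * S c := by
    rw [weightedAdjSum_comap, weightedAdjSum_top]
  have : Nonempty (Fin (ℓ - 1)) := ⟨⟨0, by omega⟩⟩
  obtain ⟨c₀, -, hc₀⟩ := exists_max_image univ S univ_nonempty
  let G₀ : SimpleGraph (Σ i, Fin (k i)) :=
    ((⊤ : SimpleGraph (Fin (ℓ - 1))).comap c₀).comap Sigma.fst
  have hG₀ : G₀.Colorable (ℓ - 1) := ⟨Coloring.mk (fun v => c₀ v.1) fun h => h⟩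
  have hG₀edges : 2 * G₀.edgeSet.ncard = 2 * S c₀ := by
    rw [← weightedAdjSum_one, weightedAdjSum_comap_sigmaFst]
    simpa using hS c₀
  refine ⟨S c₀, ⟨⟨G₀, fun _ _ h => ne_of_apply_ne c₀ h, hG₀.cliqueFree (by omega), by omega⟩, ?_⟩,
    ⟨c₀, rfl⟩, fun _ ⟨c, hc⟩ => hc ▸ hc₀ c (mem_univ c)⟩
  rintro _ ⟨G, hG, hfree, rfl⟩
  have : ∀ i, Nonempty (Fin (k i)) := fun i => ⟨⟨0, hk i⟩⟩
  obtain ⟨c, hc⟩ := exists_weightedAdjSum_one_le_comap_top hG (m := ℓ - 1) (by omega)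
    (by rwa [Nat.sub_add_cancel (by omega)])
  simp only [Fintype.card_fin, hS, weightedAdjSum_one] at hc
  have := hc₀ c (mem_univ c)
  omega

/-- For `r ≥ ℓ - 1 ≥ 1` and positive part sizes `k_1, …, k_r`, the extremal
number `ex(K_{k_1,…,k_r}, K_ℓ)` — the maximum number of edges of a `K_ℓ`-free subgraph of the
complete multipartite graph `K_{k_1,…,k_r}` — equals the maximum, over all partitions of the
index set `[r]` into `ℓ - 1` (possibly empty) sets (encoded as colorings `c : Fin r → Fin (ℓ-1)`),
of `∑_{P < P'} k_P · k_{P'}`, the sum over unordered pairs of distinct parts. -/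
theorem multipartite_turan (r ℓ : ℕ) (hℓ : 2 ≤ ℓ) (hrℓ : ℓ - 1 ≤ r)
    (k : Fin r → ℕ) (hk : ∀ i, 1 ≤ k i) :
    ∃ M : ℕ,
      IsGreatest {m : ℕ | ∃ G : SimpleGraph (Σ i, Fin (k i)),
        G ≤ SimpleGraph.completeMultipartiteGraph (fun i => Fin (k i)) ∧ G.CliqueFree ℓ ∧
        m = G.edgeSet.ncard} M ∧
      IsGreatest {m : ℕ | ∃ c : Fin r → Fin (ℓ - 1),
        m = ∑ P : Fin (ℓ - 1), ∑ Q : Fin (ℓ - 1), if P < Q then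
              (∑ i ∈ Finset.univ.filter (fun i => c i = P), k i) *
              (∑ i ∈ Finset.univ.filter (fun i => c i = Q), k i) else 0} M :=
  multipartite_turan_general r ℓ hℓ k hk
end

section
/- Let S be a spider on n vertices of type (a_1, …, a_h), where v is its unique vertex of degree ≥ 3, h = ecc(v), and a_i is the number of vertices of S at distance i from v. Then in every legal rectilinear drawing of S, the number of crossing pairs of edges is at most C(n−1, 2) − Σ_{u ∈ V(S)} C(d(u), 2) − Σ_{i=2}^{h} ( C(⌊a_i/2⌋, 2) + C(⌈a_i/2⌉, 2) ). -/
/-!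
Of the `C(n-1, 2)` pairs of edges, the `∑ C(d(u), 2)` pairs sharing a vertex cannot cross. Call
two vertices `u, u'` at the same distance `i ≥ 2` from `v` joined if every edge of the leg (the
path from `v`) of each of them crosses the top edge of the other. The sides of the line of the
top edge of `u` then alternate along the leg of `u'`, and vice versa; since both legs start at
`v`, the point `v` lies to the left of exactly one of the two top edges directed away from `v`.
So no three vertices are pairwise joined, and by Mantel's theorem at least
`C(⌊a_i/2⌋, 2) + C(⌈a_i/2⌉, 2)` pairs at level `i` are not joined. Each of them yields a
non-crossing pair of disjoint edges (the top edge of one leg and an edge of the other), and such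
a pair determines `i` and the two vertices, because legs are disjoint away from `v`.
-/

open Finset

/-- The open straight-line segment drawn for the edge `e` under the drawing `f`. -/
def edgeSeg {V : Type*} (f : V → ℝ × ℝ) (e : Sym2 V) : Set (ℝ × ℝ) :=
  Sym2.lift ⟨fun u v => openSegment ℝ (f u) (f v),
    fun u v => openSegment_symm ℝ (f u) (f v)⟩ e

/-- A legal rectilinear drawing of the graph `G`: an injective placement of the vertices in
the plane such that no edge passes through (the image of) a vertex it is not incident with,
and no three (open) edge segments pass through a common point. -/
def IsLegalDrawing {V : Type*} (G : SimpleGraph V) (f : V → ℝ × ℝ) : Prop :=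
  Function.Injective f ∧
  (∀ u v x : V, G.Adj u v → x ≠ u → x ≠ v → f x ∉ openSegment ℝ (f u) (f v)) ∧
  ∀ (p : ℝ × ℝ) (e₁ e₂ e₃ : Sym2 V), e₁ ∈ G.edgeSet → e₂ ∈ G.edgeSet → e₃ ∈ G.edgeSet →
    e₁ ≠ e₂ → e₁ ≠ e₃ → e₂ ≠ e₃ →
    ¬ (p ∈ edgeSeg f e₁ ∧ p ∈ edgeSeg f e₂ ∧ p ∈ edgeSeg f e₃)

/-- The number of crossing pairs of edges in the drawing `f` of `G`: the number of unordered
pairs (two-element sets) `{e₁, e₂}` of edges sharing no endpoint whose drawn open segments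
intersect. -/
noncomputable def crossCount {V : Type*} (G : SimpleGraph V) (f : V → ℝ × ℝ) : ℕ :=
  Set.ncard {s : Set (Sym2 V) | ∃ e₁ e₂ : Sym2 V,
    e₁ ∈ G.edgeSet ∧ e₂ ∈ G.edgeSet ∧ (∀ x, x ∈ e₁ → x ∉ e₂) ∧
    (edgeSeg f e₁ ∩ edgeSeg f e₂).Nonempty ∧ s = {e₁, e₂}}

def orient (a b c : ℝ × ℝ) : ℝ :=
  (b.1 - a.1) * (c.2 - a.2) - (b.2 - a.2) * (c.1 - a.1)

lemma orient_lineMap (a b c d : ℝ × ℝ) (t : ℝ) :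
    orient a b (AffineMap.lineMap c d t) = (1 - t) * orient a b c + t * orient a b d := by
  simp only [orient, AffineMap.lineMap_apply_module, Prod.fst_add, Prod.snd_add, Prod.smul_fst,
    Prod.smul_snd, smul_eq_mul]
  ring

lemma orient_lineMap_self (a b : ℝ × ℝ) (t : ℝ) : orient a b (AffineMap.lineMap a b t) = 0 := by
  rw [orient_lineMap]; simp only [orient]; ring

lemma orient_sub_orient (a b c d : ℝ × ℝ) :
    orient a b d - orient a b c = orient c d a - orient c d b := by
  simp only [orient]; ring

lemma exists_lineMap_eq_of_orient_eq_zero {a b c : ℝ × ℝ} (hab : a ≠ b) (h : orient a b c = 0) :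
    ∃ t : ℝ, AffineMap.lineMap a b t = c := by
  simp only [orient] at h
  have hne : b.1 - a.1 ≠ 0 ∨ b.2 - a.2 ≠ 0 := by
    by_contra! h'
    exact hab (Prod.ext (by linarith) (by linarith))
  rcases hne with h1 | h2
  · refine ⟨(c.1 - a.1) / (b.1 - a.1), Prod.ext ?_ ?_⟩ <;>
      simp only [AffineMap.lineMap_apply_module', Prod.fst_add, Prod.snd_add, Prod.smul_fst,
        Prod.smul_snd, Prod.fst_sub, Prod.snd_sub, smul_eq_mul] <;> field_simp <;> linarith
  · refine ⟨(c.2 - a.2) / (b.2 - a.2), Prod.ext ?_ ?_⟩ <;>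
      simp only [AffineMap.lineMap_apply_module', Prod.fst_add, Prod.snd_add, Prod.smul_fst,
        Prod.smul_snd, Prod.fst_sub, Prod.snd_sub, smul_eq_mul] <;> field_simp <;> linarith

lemma Real.endpoint_mem_openSegment_of_inter {a b c d : ℝ}
    (h : (openSegment ℝ a b ∩ openSegment ℝ c d).Nonempty)
    (hca : c ≠ a) (hcb : c ≠ b) (hda : d ≠ a) (hdb : d ≠ b) :
    c ∈ openSegment ℝ a b ∨ d ∈ openSegment ℝ a b ∨
      a ∈ openSegment ℝ c d ∨ b ∈ openSegment ℝ c d := by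
  obtain ⟨p, hpab, hpcd⟩ := h
  rcases eq_or_ne a b with rfl | hab
  · rw [openSegment_same, Set.mem_singleton_iff] at hpab
    exact .inr <| .inr <| .inl <| hpab ▸ hpcd
  rcases eq_or_ne c d with rfl | hcd
  · rw [openSegment_same, Set.mem_singleton_iff] at hpcd
    exact .inl <| hpcd ▸ hpab
  simp only [openSegment_eq_Ioo' hab, openSegment_eq_Ioo' hcd, Set.mem_Ioo] at hpab hpcd ⊢
  grind

lemma endpoint_mem_openSegment_of_orient_eq_zero {A B C D : ℝ × ℝ}
    (hC : orient A B C = 0) (hD : orient A B D = 0)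
    (h : (openSegment ℝ A B ∩ openSegment ℝ C D).Nonempty)
    (hCA : C ≠ A) (hCB : C ≠ B) (hDA : D ≠ A) (hDB : D ≠ B) :
    C ∈ openSegment ℝ A B ∨ D ∈ openSegment ℝ A B ∨
      A ∈ openSegment ℝ C D ∨ B ∈ openSegment ℝ C D := by
  rcases eq_or_ne A B with rfl | hAB
  · obtain ⟨p, hpA, hpCD⟩ := h
    rw [openSegment_same, Set.mem_singleton_iff] at hpA
    exact .inr <| .inr <| .inl <| hpA ▸ hpCD
  obtain ⟨c, rfl⟩ := exists_lineMap_eq_of_orient_eq_zero hAB hC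
  obtain ⟨d, rfl⟩ := exists_lineMap_eq_of_orient_eq_zero hAB hD
  set L : ℝ →ᵃ[ℝ] ℝ × ℝ := AffineMap.lineMap A B
  have hL : Function.Injective L := AffineMap.lineMap_injective ℝ hAB
  have hA : L 0 = A := AffineMap.lineMap_apply_zero A B
  have hB : L 1 = B := AffineMap.lineMap_apply_one A B
  rw [← hA] at hCA hDA
  rw [← hB] at hCB hDB
  rw [← hA, ← hB] at h ⊢
  simp only [← image_openSegment, hL.mem_set_image, hL.ne_iff] at h hCA hCB hDA hDB ⊢
  rw [← Set.image_inter hL, Set.image_nonempty] at h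
  exact Real.endpoint_mem_openSegment_of_inter h hCA hCB hDA hDB

lemma orient_mul_orient_neg_of_openSegment_inter {A B C D : ℝ × ℝ}
    (h : (openSegment ℝ A B ∩ openSegment ℝ C D).Nonempty)
    (hCA : C ≠ A) (hCB : C ≠ B) (hDA : D ≠ A) (hDB : D ≠ B)
    (hC : C ∉ openSegment ℝ A B) (hD : D ∉ openSegment ℝ A B)
    (hA : A ∉ openSegment ℝ C D) (hB : B ∉ openSegment ℝ C D) :
    orient A B C * orient A B D < 0 := by
  obtain ⟨p, hpAB, hpCD⟩ := h
  obtain ⟨t, -, rfl⟩ := (openSegment_eq_image_lineMap ℝ A B).subst (motive := (p ∈ ·)) hpAB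
  obtain ⟨σ, ⟨hσ0, hσ1⟩, hσ⟩ := (openSegment_eq_image_lineMap ℝ C D).subst (motive := (_ ∈ ·)) hpCD
  have key : (1 - σ) * orient A B C + σ * orient A B D = 0 := by
    rw [← orient_lineMap, hσ, orient_lineMap_self]
  by_cases hCl : orient A B C = 0
  · have hDl : orient A B D = 0 := by
      rw [hCl] at key
      exact (mul_eq_zero.mp (by linarith)).resolve_left hσ0.ne'
    have := endpoint_mem_openSegment_of_orient_eq_zero hCl hDl ⟨_, hpAB, hpCD⟩ hCA hCB hDA hDB
    tauto
  · have : σ * (orient A B C * orient A B D) = -((1 - σ) * orient A B C ^ 2) := by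
      linear_combination orient A B C * key
    nlinarith [sq_pos_of_ne_zero hCl]

lemma neg_one_pow_mul_pos_of_alternating {g : ℕ → ℝ} {i : ℕ} (hi : 1 ≤ i)
    (h : ∀ t, 1 ≤ t → t ≤ i → g (t - 1) * g t < 0) : 0 < (-1) ^ i * (g 0 * g i) := by
  induction i, hi using Nat.le_induction with
  | base => simpa using h 1 le_rfl le_rfl
  | succ k hk ih =>
    have hprev := ih fun t ht1 htk => h t ht1 (by omega)
    have hstep : g k * g (k + 1) < 0 := by simpa using h (k + 1) (by omega) le_rfl
    have : (-1) ^ (k + 1) * (g 0 * g (k + 1)) * g k ^ 2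
        = ((-1) ^ k * (g 0 * g k)) * -(g k * g (k + 1)) := by ring
    exact pos_of_mul_pos_left (this ▸ mul_pos hprev (neg_pos.mpr hstep)) (sq_nonneg _)

lemma mul_neg_of_mul_pos_of_mul_neg {s a b : ℝ} (hsa : 0 < s * a) (hba : b * a < 0) :
    s * b < 0 :=
  neg_of_mul_neg_left (by linarith [mul_neg_of_pos_of_neg hsa hba] : s * b * (a * a) < 0)
    (mul_self_nonneg a)

lemma orient_mul_orient_neg_of_paths {y y' : ℕ → ℝ × ℝ} {i : ℕ} (hi : 1 ≤ i) (h0 : y 0 = y' 0)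
    (h : ∀ t, 1 ≤ t → t ≤ i →
      orient (y (i - 1)) (y i) (y' (t - 1)) * orient (y (i - 1)) (y i) (y' t) < 0)
    (h' : ∀ t, 1 ≤ t → t ≤ i →
      orient (y' (i - 1)) (y' i) (y (t - 1)) * orient (y' (i - 1)) (y' i) (y t) < 0) :
    orient (y (i - 1)) (y i) (y 0) * orient (y' (i - 1)) (y' i) (y' 0) < 0 := by
  set g := orient (y (i - 1)) (y i)
  set g' := orient (y' (i - 1)) (y' i)
  have ha := neg_one_pow_mul_pos_of_alternating (g := fun t => g (y' t)) hi h
  have ha' := neg_one_pow_mul_pos_of_alternating (g := fun t => g' (y t)) hi h'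
  have hl := h i hi le_rfl
  have hl' := h' i hi le_rfl
  have hswap : g (y' i) - g (y' (i - 1)) = -(g' (y i) - g' (y (i - 1))) := by
    simp only [g, g']
    linarith [orient_sub_orient (y (i - 1)) (y i) (y' (i - 1)) (y' i)]
  simp only [h0] at ha ha' ⊢
  -- By alternation, `s` has the sign of `g (y' i) - g (y' (i - 1))` and `s'` that of
  -- `g' (y i) - g' (y (i - 1))`, which by `hswap` is the opposite one.
  set s := (-1) ^ i * g (y' 0)
  set s' := (-1) ^ i * g' (y' 0)
  have hs : 0 < s * (g (y' i) - g (y' (i - 1))) := by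
    have : 0 < s * g (y' i) := by simpa only [s, mul_assoc] using ha
    linarith [mul_neg_of_mul_pos_of_mul_neg this hl]
  have hs' : 0 < s' * (g' (y i) - g' (y (i - 1))) := by
    have : 0 < s' * g' (y i) := by simpa only [s', mul_assoc] using ha'
    linarith [mul_neg_of_mul_pos_of_mul_neg this hl']
  have hss : s * s' = g (y' 0) * g' (y' 0) := by
    simp only [s, s']
    rw [mul_mul_mul_comm, ← pow_add, ← two_mul, pow_mul, neg_one_sq, one_pow, one_mul]
  rw [hswap, mul_neg, neg_pos] at hs
  rw [← hss]
  set X := g' (y i) - g' (y (i - 1))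
  have : s * s' * (X * X) < 0 := by linarith [mul_neg_of_neg_of_pos hs hs']
  exact neg_of_mul_neg_left this (mul_self_nonneg X)

-- The number of non-edges of `K_{⌊N/2⌋,⌈N/2⌉}`; by Mantel's theorem no triangle-free graph on
-- `N` vertices has fewer.
def mantelBound (N : ℕ) : ℕ := (N / 2).choose 2 + ((N + 1) / 2).choose 2

lemma SimpleGraph.card_edgeFinset_add_card_edgeFinset_compl {W : Type*} [Fintype W] [DecidableEq W]
    (H : SimpleGraph W) [DecidableRel H.Adj] :
    #H.edgeFinset + #Hᶜ.edgeFinset = (Fintype.card W).choose 2 := by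
  rw [← card_edgeFinset_top_eq_card_choose_two, ← card_union_of_disjoint
    (disjoint_edgeFinset.mpr disjoint_compl_right), ← edgeFinset_sup]
  congr! 2
  exact sup_compl_eq_top

-- `hE` is Turán's bound `SimpleGraph.CliqueFree.card_edgeFinset_le` for `r = 2`.
lemma mantelBound_add_le_choose_two {N E : ℕ}
    (hE : E ≤ (N ^ 2 - (N % 2) ^ 2) * (2 - 1) / (2 * 2) + (N % 2).choose 2) :
    mantelBound N + E ≤ N.choose 2 := by
  obtain ⟨m, rfl | rfl⟩ := Nat.even_or_odd' N
  · have hsq : (2 * m) ^ 2 = 4 * m ^ 2 := by ring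
    have hE' : E ≤ m ^ 2 := by simpa [hsq] using hE
    have hm : (2 * m + 1) / 2 = m := by omega
    simp only [mantelBound, hm, Nat.mul_div_cancel_left m two_pos]
    qify at hE' ⊢
    simp only [Nat.cast_choose_two]
    push_cast
    linarith
  · have hsq : (2 * m + 1) ^ 2 - 1 = 4 * (m ^ 2 + m) := Nat.sub_eq_of_eq_add (by ring)
    have hE' : E ≤ m ^ 2 + m := by simpa [Nat.add_mod, hsq] using hE
    have hm : (2 * m + 1) / 2 = m := by omega
    have hm' : (2 * m + 1 + 1) / 2 = m + 1 := by omega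
    simp only [mantelBound, hm, hm']
    qify at hE' ⊢
    simp only [Nat.cast_choose_two]
    push_cast
    linarith

lemma SimpleGraph.CliqueFree.mantelBound_le_card_edgeFinset_compl {W : Type*} [Fintype W]
    [DecidableEq W] {H : SimpleGraph W} [DecidableRel H.Adj] (h : H.CliqueFree 3) :
    mantelBound (Fintype.card W) ≤ #Hᶜ.edgeFinset := by
  have := mantelBound_add_le_choose_two (h.card_edgeFinset_le (r := 2))
  have := H.card_edgeFinset_add_card_edgeFinset_compl
  omega

section Geodesics

variable {V : Type*} {G : SimpleGraph V}

lemma SimpleGraph.Walk.dist_getVert_of_length_eq_dist (hG : G.Connected) {v u : V}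
    (p : G.Walk v u) (hp : p.length = G.dist v u) {t : ℕ} (ht : t ≤ p.length) :
    G.dist v (p.getVert t) = t := by
  have h₁ := SimpleGraph.dist_le (p.take t)
  have h₂ := SimpleGraph.dist_le (p.drop t)
  have h₃ := hG.dist_triangle (u := v) (v := p.getVert t) (w := u)
  rw [Walk.take_length] at h₁
  rw [Walk.drop_length] at h₂
  omega

structure IsGeodesicSystem (G : SimpleGraph V) (v : V) (x : V → ℕ → V) : Prop where
  apply_zero : ∀ u, x u 0 = v
  apply_dist : ∀ u, x u (G.dist v u) = u
  adj : ∀ u t, t < G.dist v u → G.Adj (x u t) (x u (t + 1))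
  dist_apply : ∀ u t, t ≤ G.dist v u → G.dist v (x u t) = t

lemma SimpleGraph.Connected.exists_isGeodesicSystem (hG : G.Connected) (v : V) :
    ∃ x, IsGeodesicSystem G v x := by
  choose p hp using fun u => hG.exists_walk_length_eq_dist v u
  refine ⟨fun u t => (p u).getVert t, fun u => (p u).getVert_zero, fun u => ?_,
    fun u t ht => (p u).adj_getVert_succ (hp u ▸ ht),
    fun u t ht => (p u).dist_getVert_of_length_eq_dist hG (hp u) (hp u ▸ ht)⟩
  simpa only [hp u] using (p u).getVert_length

lemma SimpleGraph.three_le_degree_of_adj [Fintype V] [DecidableRel G.Adj] {w a b c : V}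
    (ha : G.Adj w a) (hb : G.Adj w b) (hc : G.Adj w c) (hab : a ≠ b) (hac : a ≠ c)
    (hbc : b ≠ c) : 3 ≤ G.degree w := by
  classical
  rw [← card_neighborFinset_eq_degree]
  calc 3 = #{a, b, c} := (card_eq_three.mpr ⟨a, b, c, hab, hac, hbc, rfl⟩).symm
    _ ≤ _ := card_le_card <| by
      intro z hz
      simp only [mem_insert, mem_singleton] at hz
      rcases hz with rfl | rfl | rfl <;> simpa

end Geodesics

def legEdge {V : Type*} (x : V → ℕ → V) (u : V) (t : ℕ) : Sym2 V := s(x u (t - 1), x u t)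

namespace IsGeodesicSystem

variable {V : Type*} {G : SimpleGraph V} {v : V} {x : V → ℕ → V}

lemma legEdge_mem_edgeSet (hx : IsGeodesicSystem G v x) {u : V} {t : ℕ} (ht : 1 ≤ t)
    (hti : t ≤ G.dist v u) : legEdge x u t ∈ G.edgeSet := by
  simpa [legEdge, Nat.sub_add_cancel ht] using hx.adj u (t - 1) (by omega)

lemma eq_index_of_legEdge_eq (hx : IsGeodesicSystem G v x) {u q : V} {t s : ℕ} (ht : 1 ≤ t)
    (hti : t ≤ G.dist v u) (hs : 1 ≤ s) (hsq : s ≤ G.dist v q)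
    (h : legEdge x u t = legEdge x q s) : t = s := by
  have d₁ := hx.dist_apply u (t - 1) (by omega)
  have d₂ := hx.dist_apply u t hti
  have d₃ := hx.dist_apply q (s - 1) (by omega)
  have d₄ := hx.dist_apply q s hsq
  rcases Sym2.eq_iff.mp h with ⟨h₁, h₂⟩ | ⟨h₁, h₂⟩
  · rw [h₂] at d₂; omega
  · rw [h₁] at d₁; rw [h₂] at d₂; omega

variable [Fintype V] [DecidableRel G.Adj]

lemma apply_ne_apply (hx : IsGeodesicSystem G v x)
    (huniq : ∀ w, 3 ≤ G.degree w → w = v) {u u' : V} (hd : G.dist v u = G.dist v u')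
    (hne : u ≠ u') {t s : ℕ} (ht : 1 ≤ t) (hti : t ≤ G.dist v u) (hs : s ≤ G.dist v u) :
    x u t ≠ x u' s := by
  intro heq
  have hts : t = s := by
    rw [← hx.dist_apply u t hti, heq, hx.dist_apply u' s (hd ▸ hs)]
  subst hts
  revert ht heq
  refine Nat.decreasingInduction (motive := fun t _ => 1 ≤ t → x u t ≠ x u' t)
    (fun k hk ih hk1 heq => ?_) (fun _ => by rwa [hx.apply_dist, hd, hx.apply_dist]) hti
  -- A common vertex at level `k ≥ 1` of two legs that differ at level `k + 1` has three
  -- neighbours, at levels `k - 1`, `k + 1` and `k + 1`.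
  have hd₁ := hx.dist_apply u (k - 1) (by omega)
  have hd₂ := hx.dist_apply u (k + 1) hk
  have hd₃ := hx.dist_apply u' (k + 1) (hd ▸ hk)
  have hw := huniq (x u k) <| G.three_le_degree_of_adj
    (by simpa [Nat.sub_add_cancel hk1] using (hx.adj u (k - 1) (by omega)).symm)
    (hx.adj u k hk) (heq ▸ hx.adj u' k (hd ▸ hk))
    (fun h => by rw [h] at hd₁; omega) (fun h => by rw [h] at hd₁; omega) (ih (by omega))
  have := hx.dist_apply u k hk.le
  rw [hw, SimpleGraph.dist_self] at this
  omega

lemma eq_of_legEdge_eq (hx : IsGeodesicSystem G v x)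
    (huniq : ∀ w, 3 ≤ G.degree w → w = v) {u q : V} (hd : G.dist v u = G.dist v q) {t : ℕ}
    (ht : 1 ≤ t) (hti : t ≤ G.dist v u) (h : legEdge x u t = legEdge x q t) : u = q := by
  by_contra hne
  rcases Sym2.eq_iff.mp h with ⟨-, h₂⟩ | ⟨-, h₂⟩
  · exact hx.apply_ne_apply huniq hd hne ht hti hti h₂
  · exact hx.apply_ne_apply huniq hd hne ht hti (by omega) h₂

lemma legEdge_disjoint (hx : IsGeodesicSystem G v x) (huniq : ∀ w, 3 ≤ G.degree w → w = v)
    {u u' : V} {i t : ℕ} (hu : G.dist v u = i) (hu' : G.dist v u' = i) (hne : u ≠ u')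
    (hi : 2 ≤ i) (ht : 1 ≤ t) (hti : t ≤ i) : ∀ z ∈ legEdge x u i, z ∉ legEdge x u' t := by
  intro z hz hz'
  simp only [legEdge, Sym2.mem_iff] at hz hz'
  rcases hz with rfl | rfl <;> rcases hz' with h | h <;>
    exact hx.apply_ne_apply huniq (hu.trans hu'.symm) hne (by omega) (by omega) (by omega) h

end IsGeodesicSystem

section Drawings

variable {V : Type*} {G : SimpleGraph V} {f : V → ℝ × ℝ}

lemma Sym2.ne_of_forall_notMem {e₁ e₂ : Sym2 V} (h : ∀ z ∈ e₁, z ∉ e₂) : e₁ ≠ e₂ := by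
  rintro rfl
  exact h _ (Sym2.out_fst_mem e₁) (Sym2.out_fst_mem e₁)

def SegmentsMeet (f : V → ℝ × ℝ) (e₁ e₂ : Sym2 V) : Prop :=
  (edgeSeg f e₁ ∩ edgeSeg f e₂).Nonempty

lemma SegmentsMeet.symm {e₁ e₂ : Sym2 V} (h : SegmentsMeet f e₁ e₂) : SegmentsMeet f e₂ e₁ := by
  rwa [SegmentsMeet, Set.inter_comm]

lemma IsLegalDrawing.orient_mul_orient_neg (hf : IsLegalDrawing G f) {a b c d : V}
    (hab : G.Adj a b) (hcd : G.Adj c d) (hdisj : ∀ z ∈ s(a, b), z ∉ s(c, d))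
    (h : SegmentsMeet f s(a, b) s(c, d)) :
    orient (f a) (f b) (f c) * orient (f a) (f b) (f d) < 0 := by
  obtain ⟨hinj, hvert, -⟩ := hf
  have hca : c ≠ a := fun h => hdisj a (by simp) (by simp [h])
  have hcb : c ≠ b := fun h => hdisj b (by simp) (by simp [h])
  have hda : d ≠ a := fun h => hdisj a (by simp) (by simp [h])
  have hdb : d ≠ b := fun h => hdisj b (by simp) (by simp [h])
  exact orient_mul_orient_neg_of_openSegment_inter h (hinj.ne hca) (hinj.ne hcb) (hinj.ne hda)
    (hinj.ne hdb) (hvert a b c hab hca hcb) (hvert a b d hab hda hdb)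
    (hvert c d a hcd hca.symm hda.symm) (hvert c d b hcd hcb.symm hdb.symm)

variable [DecidableEq V]

def IsDisjointNoncrossingPair (G : SimpleGraph V) (f : V → ℝ × ℝ) (p : Finset (Sym2 V)) :
    Prop :=
  ∃ e₁ ∈ G.edgeSet, ∃ e₂ ∈ G.edgeSet, p = {e₁, e₂} ∧ (∀ z ∈ e₁, z ∉ e₂) ∧ ¬ SegmentsMeet f e₁ e₂

lemma crossCount_le_card {X : Finset (Finset (Sym2 V))}
    (hX : ∀ e₁ ∈ G.edgeSet, ∀ e₂ ∈ G.edgeSet, (∀ z ∈ e₁, z ∉ e₂) → SegmentsMeet f e₁ e₂ →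
      {e₁, e₂} ∈ X) :
    crossCount G f ≤ #X := by
  have hsub : {s : Set (Sym2 V) | ∃ e₁ e₂ : Sym2 V, e₁ ∈ G.edgeSet ∧ e₂ ∈ G.edgeSet ∧
      (∀ x, x ∈ e₁ → x ∉ e₂) ∧ (edgeSeg f e₁ ∩ edgeSeg f e₂).Nonempty ∧ s = {e₁, e₂}} ⊆
      (fun p : Finset (Sym2 V) => (p : Set (Sym2 V))) '' X := by
    rintro _ ⟨e₁, e₂, he₁, he₂, hdisj, hmeet, rfl⟩
    exact ⟨{e₁, e₂}, hX e₁ he₁ e₂ he₂ hdisj hmeet, by simp⟩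
  calc crossCount G f ≤ Set.ncard ((fun p : Finset (Sym2 V) => (p : Set (Sym2 V))) '' X) :=
        Set.ncard_le_ncard hsub (X.finite_toSet.image _)
    _ ≤ Set.ncard (X : Set (Finset (Sym2 V))) := Set.ncard_image_le X.finite_toSet
    _ = #X := Set.ncard_coe_finset X

end Drawings

section Counting

variable {V : Type*} [Fintype V] [DecidableEq V] {G : SimpleGraph V} [DecidableRel G.Adj]
  {f : V → ℝ × ℝ}

def SimpleGraph.incidentPairs (G : SimpleGraph V) [DecidableRel G.Adj] :
    Finset (Finset (Sym2 V)) :=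
  univ.biUnion fun u => (G.incidenceFinset u).powersetCard 2

lemma SimpleGraph.card_incidentPairs : #G.incidentPairs = ∑ u, (G.degree u).choose 2 := by
  rw [incidentPairs, card_biUnion]
  · simp only [card_powersetCard, card_incidenceFinset_eq_degree]
  intro u _ u' _ hne
  rw [Function.onFun, Finset.disjoint_left]
  intro p hp hp'
  rw [mem_powersetCard] at hp hp'
  obtain ⟨e₁, e₂, hne₁₂, rfl⟩ := card_eq_two.mp hp.2
  have key : ∀ e ∈ ({e₁, e₂} : Finset (Sym2 V)), e = s(u, u') := fun e he =>
    (Sym2.mem_and_mem_iff hne).mp ⟨((G.mem_incidenceFinset u e).mp (hp.1 he)).2,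
      ((G.mem_incidenceFinset u' e).mp (hp'.1 he)).2⟩
  exact hne₁₂ ((key e₁ (by simp)).trans (key e₂ (by simp)).symm)

lemma SimpleGraph.not_forall_notMem_of_mem_incidentPairs {p : Finset (Sym2 V)}
    (hp : p ∈ G.incidentPairs) {e₁ e₂ : Sym2 V} (he₁ : e₁ ∈ p) (he₂ : e₂ ∈ p) :
    ¬ ∀ z ∈ e₁, z ∉ e₂ := by
  obtain ⟨u, -, hp⟩ := mem_biUnion.mp hp
  have hinc := (mem_powersetCard.mp hp).1
  exact fun h => h u ((G.mem_incidenceFinset u e₁).mp (hinc he₁)).2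
    ((G.mem_incidenceFinset u e₂).mp (hinc he₂)).2

lemma SimpleGraph.incidentPairs_subset : G.incidentPairs ⊆ G.edgeFinset.powersetCard 2 :=
  biUnion_subset.mpr fun u _ => powersetCard_mono fun e he =>
    G.mem_edgeFinset.mpr ((G.mem_incidenceFinset u e).mp he).1

lemma SimpleGraph.pair_mem_powersetCard_edgeFinset {e₁ e₂ : Sym2 V} (he₁ : e₁ ∈ G.edgeSet)
    (he₂ : e₂ ∈ G.edgeSet) (hne : e₁ ≠ e₂) : {e₁, e₂} ∈ G.edgeFinset.powersetCard 2 :=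
  mem_powersetCard.mpr ⟨by simp [insert_subset_iff, he₁, he₂], card_pair hne⟩

lemma crossCount_add_sum_choose_degree_add_card_le (N : Finset (Finset (Sym2 V)))
    (hN : ∀ p ∈ N, IsDisjointNoncrossingPair G f p) :
    crossCount G f + ∑ u, (G.degree u).choose 2 + #N ≤ (#G.edgeFinset).choose 2 := by
  classical
  set X := {p ∈ G.edgeFinset.powersetCard 2 |
    ∃ e₁ ∈ p, ∃ e₂ ∈ p, (∀ z ∈ e₁, z ∉ e₂) ∧ SegmentsMeet f e₁ e₂}
  have hX : crossCount G f ≤ #X := crossCount_le_card fun e₁ he₁ e₂ he₂ hdisj hmeet =>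
    mem_filter.mpr ⟨G.pair_mem_powersetCard_edgeFinset he₁ he₂ (Sym2.ne_of_forall_notMem hdisj),
      e₁, by simp, e₂, by simp, hdisj, hmeet⟩
  have hAX : Disjoint G.incidentPairs X := disjoint_left.mpr fun p hpA hpX => by
    obtain ⟨-, e₁, he₁, e₂, he₂, hdisj, -⟩ := mem_filter.mp hpX
    exact G.not_forall_notMem_of_mem_incidentPairs hpA he₁ he₂ hdisj
  have hAN : Disjoint G.incidentPairs N := disjoint_left.mpr fun p hpA hpN => by
    obtain ⟨e₁, -, e₂, -, rfl, hdisj, -⟩ := hN p hpN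
    exact G.not_forall_notMem_of_mem_incidentPairs hpA (by simp) (by simp) hdisj
  have hXN : Disjoint X N := disjoint_left.mpr fun p hpX hpN => by
    obtain ⟨-, d₁, hd₁, d₂, hd₂, hddisj, hmeet⟩ := mem_filter.mp hpX
    obtain ⟨e₁, -, e₂, -, rfl, -, hnmeet⟩ := hN _ hpN
    have hne : d₁ ≠ d₂ := Sym2.ne_of_forall_notMem hddisj
    simp only [mem_insert, mem_singleton] at hd₁ hd₂
    rcases hd₁ with rfl | rfl <;> rcases hd₂ with rfl | rfl
    all_goals first | exact hne rfl | exact hnmeet hmeet | exact hnmeet hmeet.symm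
  have hsub : G.incidentPairs ∪ X ∪ N ⊆ G.edgeFinset.powersetCard 2 := by
    refine union_subset (union_subset G.incidentPairs_subset (filter_subset _ _)) fun p hp => ?_
    obtain ⟨e₁, he₁, e₂, he₂, rfl, hdisj, -⟩ := hN p hp
    exact G.pair_mem_powersetCard_edgeFinset he₁ he₂ (Sym2.ne_of_forall_notMem hdisj)
  calc crossCount G f + ∑ u, (G.degree u).choose 2 + #N ≤ #G.incidentPairs + #X + #N := by
        rw [G.card_incidentPairs]; omega
    _ = #(G.incidentPairs ∪ X ∪ N) := by
        rw [card_union_of_disjoint (disjoint_union_left.mpr ⟨hAN, hXN⟩),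
          card_union_of_disjoint hAX]
    _ ≤ #(G.edgeFinset.powersetCard 2) := card_le_card hsub
    _ = (#G.edgeFinset).choose 2 := card_powersetCard _ _

end Counting

section CrossingGraph

variable {V : Type*} {G : SimpleGraph V} {v : V} {x : V → ℕ → V} {f : V → ℝ × ℝ} {i : ℕ}

def crossingGraph (G : SimpleGraph V) (v : V) (x : V → ℕ → V) (f : V → ℝ × ℝ) (i : ℕ) :
    SimpleGraph {u // G.dist v u = i} where
  Adj u u' := u ≠ u' ∧ ∀ t, 1 ≤ t → t ≤ i →
    SegmentsMeet f (legEdge x u i) (legEdge x u' t) ∧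
      SegmentsMeet f (legEdge x u' i) (legEdge x u t)
  symm := ⟨fun _ _ h => ⟨h.1.symm, fun t ht hti => (h.2 t ht hti).symm⟩⟩
  loopless := ⟨fun _ h => h.1 rfl⟩

variable [Fintype V] [DecidableRel G.Adj]

lemma IsGeodesicSystem.orient_mul_orient_neg_of_crossingGraph_adj (hx : IsGeodesicSystem G v x)
    (huniq : ∀ w, 3 ≤ G.degree w → w = v) (hf : IsLegalDrawing G f) (hi : 2 ≤ i)
    {u u' : {u // G.dist v u = i}} (h : (crossingGraph G v x f i).Adj u u') :
    orient (f (x u (i - 1))) (f (x u i)) (f v) *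
      orient (f (x u' (i - 1))) (f (x u' i)) (f v) < 0 := by
  have hne : (u : V) ≠ u' := Subtype.coe_injective.ne h.1
  have hmeet {w w' : {u // G.dist v u = i}} (hne : (w : V) ≠ w')
      (h : ∀ t, 1 ≤ t → t ≤ i → SegmentsMeet f (legEdge x w i) (legEdge x w' t)) :
      ∀ t, 1 ≤ t → t ≤ i → orient (f (x w (i - 1))) (f (x w i)) (f (x w' (t - 1))) *
        orient (f (x w (i - 1))) (f (x w i)) (f (x w' t)) < 0 := fun t ht hti =>
    hf.orient_mul_orient_neg (hx.legEdge_mem_edgeSet (by omega) w.2.ge)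
      (hx.legEdge_mem_edgeSet ht (w'.2.symm ▸ hti))
      (hx.legEdge_disjoint huniq w.2 w'.2 hne hi ht hti) (h t ht hti)
  simpa only [Function.comp, hx.apply_zero] using
    orient_mul_orient_neg_of_paths (y := f ∘ x u) (y' := f ∘ x u') (by omega)
      (by simp only [Function.comp, hx.apply_zero])
      (hmeet hne fun t ht hti => (h.2 t ht hti).1) (hmeet hne.symm fun t ht hti => (h.2 t ht hti).2)

lemma IsGeodesicSystem.crossingGraph_cliqueFree (hx : IsGeodesicSystem G v x)
    (huniq : ∀ w, 3 ≤ G.degree w → w = v) (hf : IsLegalDrawing G f) (hi : 2 ≤ i) :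
    (crossingGraph G v x f i).CliqueFree 3 := by
  classical
  intro s hs
  obtain ⟨a, b, c, hab, hac, hbc, -⟩ := SimpleGraph.is3Clique_iff.mp hs
  have h₁ := hx.orient_mul_orient_neg_of_crossingGraph_adj huniq hf hi hab
  have h₂ := hx.orient_mul_orient_neg_of_crossingGraph_adj huniq hf hi hac
  have h₃ := hx.orient_mul_orient_neg_of_crossingGraph_adj huniq hf hi hbc
  set σ : {u // G.dist v u = i} → ℝ := fun u => orient (f (x u (i - 1))) (f (x u i)) (f v)
  nlinarith [mul_neg_of_pos_of_neg (mul_pos_of_neg_of_neg h₁ h₂) h₃, sq_nonneg (σ a * σ b * σ c)]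

end CrossingGraph

section Witnesses

variable {V : Type*} [Fintype V] [DecidableEq V] {G : SimpleGraph V} {v : V} {x : V → ℕ → V}
  {f : V → ℝ × ℝ}

open Classical in
noncomputable def legWitnesses (G : SimpleGraph V) (v : V) (x : V → ℕ → V) (f : V → ℝ × ℝ)
    (k : Σ i : ℕ, Sym2 {u // G.dist v u = i}) : Finset (Finset (Sym2 V)) :=
  {p | ∃ u u' : {u // G.dist v u = k.1}, k.2 = s(u, u') ∧ u ≠ u' ∧ ∃ t, 1 ≤ t ∧ t ≤ k.1 ∧
    p = {legEdge x u k.1, legEdge x u' t} ∧ ¬ SegmentsMeet f (legEdge x u k.1) (legEdge x u' t)}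

lemma mem_legWitnesses {i : ℕ} {e : Sym2 {u // G.dist v u = i}} {p : Finset (Sym2 V)} :
    p ∈ legWitnesses G v x f ⟨i, e⟩ ↔
      ∃ u u' : {u // G.dist v u = i}, e = s(u, u') ∧ u ≠ u' ∧ ∃ t, 1 ≤ t ∧ t ≤ i ∧
        p = {legEdge x u i, legEdge x u' t} ∧
          ¬ SegmentsMeet f (legEdge x u i) (legEdge x u' t) := by
  simp [legWitnesses]

lemma legWitnesses_nonempty {i : ℕ} {e : Sym2 {u // G.dist v u = i}}
    (he : e ∈ (crossingGraph G v x f i)ᶜ.edgeSet) : (legWitnesses G v x f ⟨i, e⟩).Nonempty := by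
  induction e using Sym2.ind with | _ u u' => ?_
  obtain ⟨hne, hnadj⟩ := (SimpleGraph.compl_adj _ _ _).mp he
  simp only [crossingGraph, hne, ne_eq, not_false_eq_true, true_and, not_forall, not_and] at hnadj
  obtain ⟨t, ht, hti, hnot⟩ := hnadj
  by_cases hm : SegmentsMeet f (legEdge x u i) (legEdge x u' t)
  · exact ⟨_, mem_legWitnesses.mpr ⟨u', u, Sym2.eq_swap, Ne.symm hne, t, ht, hti, rfl, hnot hm⟩⟩
  · exact ⟨_, mem_legWitnesses.mpr ⟨u, u', rfl, hne, t, ht, hti, rfl, hm⟩⟩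

variable [DecidableRel G.Adj]

lemma IsGeodesicSystem.eq_of_pair_legEdge_eq (hx : IsGeodesicSystem G v x)
    (huniq : ∀ w, 3 ≤ G.degree w → w = v) {u u' q q' : V} {i j t r : ℕ}
    (hu : G.dist v u = i) (hu' : G.dist v u' = i) (hq : G.dist v q = j) (hq' : G.dist v q' = j)
    (ht : 1 ≤ t) (hti : t ≤ i) (hr : 1 ≤ r) (hrj : r ≤ j)
    (h : ({legEdge x u i, legEdge x u' t} : Finset (Sym2 V)) = {legEdge x q j, legEdge x q' r}) :
    i = j ∧ s(u, u') = s(q, q') := by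
  have hm₁ : legEdge x u i ∈ ({legEdge x q j, legEdge x q' r} : Finset (Sym2 V)) :=
    h ▸ mem_insert_self _ _
  have hm₂ : legEdge x q j ∈ ({legEdge x u i, legEdge x u' t} : Finset (Sym2 V)) :=
    h ▸ mem_insert_self _ _
  simp only [mem_insert, mem_singleton] at hm₁ hm₂
  have hij : i = j := by
    rcases hm₁ with h₁ | h₁
    · exact hx.eq_index_of_legEdge_eq (by omega) hu.ge (by omega) hq.ge h₁
    rcases hm₂ with h₂ | h₂
    · exact (hx.eq_index_of_legEdge_eq (by omega) hq.ge (by omega) hu.ge h₂).symm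
    have := hx.eq_index_of_legEdge_eq (by omega) hu.ge hr (hq'.symm ▸ hrj) h₁
    have := hx.eq_index_of_legEdge_eq (by omega) hq.ge ht (hu'.symm ▸ hti) h₂
    omega
  subst hij
  clear hm₁ hm₂
  refine ⟨rfl, ?_⟩
  have hpair : _ ∨ _ := Set.pair_eq_pair_iff.mp <| by
    simpa only [coe_pair] using congrArg (fun p : Finset (Sym2 V) => (p : Set (Sym2 V))) h
  rcases hpair with ⟨h₁, h₂⟩ | ⟨h₁, h₂⟩
  · have htr := hx.eq_index_of_legEdge_eq ht (hu' ▸ hti) hr (hq' ▸ hrj) h₂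
    subst htr
    rw [hx.eq_of_legEdge_eq huniq (hu.trans hq.symm) (by omega) hu.ge h₁,
      hx.eq_of_legEdge_eq huniq (hu'.trans hq'.symm) ht (hu' ▸ hti) h₂]
  · have hir := hx.eq_index_of_legEdge_eq (by omega) hu.ge hr (hq' ▸ hrj) h₁
    have hti' := hx.eq_index_of_legEdge_eq ht (hu' ▸ hti) (by omega) hq.ge h₂
    subst hir hti'
    rw [hx.eq_of_legEdge_eq huniq (hu.trans hq'.symm) (by omega) hu.ge h₁,
      hx.eq_of_legEdge_eq huniq (hu'.trans hq.symm) ht hu'.ge h₂, Sym2.eq_swap]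

lemma IsGeodesicSystem.isDisjointNoncrossingPair_of_mem_legWitnesses
    (hx : IsGeodesicSystem G v x) (huniq : ∀ w, 3 ≤ G.degree w → w = v)
    {i : ℕ} {e : Sym2 {u // G.dist v u = i}} (hi : 2 ≤ i) {p : Finset (Sym2 V)}
    (hp : p ∈ legWitnesses G v x f ⟨i, e⟩) : IsDisjointNoncrossingPair G f p := by
  obtain ⟨u, u', -, hne, t, ht, hti, rfl, hnmeet⟩ := mem_legWitnesses.mp hp
  exact ⟨_, hx.legEdge_mem_edgeSet (by omega) u.2.ge, _,
    hx.legEdge_mem_edgeSet ht (u'.2.symm ▸ hti), rfl,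
    hx.legEdge_disjoint huniq u.2 u'.2 (Subtype.coe_injective.ne hne) hi ht hti, hnmeet⟩

lemma IsGeodesicSystem.pairwise_disjoint_legWitnesses (hx : IsGeodesicSystem G v x)
    (huniq : ∀ w, 3 ≤ G.degree w → w = v) :
    Pairwise (Function.onFun Disjoint (legWitnesses G v x f)) := by
  rintro ⟨i, e⟩ ⟨j, e'⟩ hne
  rw [Function.onFun, Finset.disjoint_left]
  intro p hp hp'
  obtain ⟨u, u', rfl, -, t, ht, hti, rfl, -⟩ := mem_legWitnesses.mp hp
  obtain ⟨q, q', rfl, -, r, hr, hrj, hpq, -⟩ := mem_legWitnesses.mp hp'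
  obtain ⟨rfl, heq⟩ := hx.eq_of_pair_legEdge_eq huniq u.2 u'.2 q.2 q'.2 ht hti hr hrj hpq
  exact hne <| congrArg (Sigma.mk i) <|
    Sym2.map.injective Subtype.val_injective (by simpa only [Sym2.map_mk] using heq)

lemma IsGeodesicSystem.exists_disjointNoncrossingPairs (hx : IsGeodesicSystem G v x)
    (huniq : ∀ w, 3 ≤ G.degree w → w = v) (hf : IsLegalDrawing G f) (L : Finset ℕ)
    (hL : ∀ i ∈ L, 2 ≤ i) :
    ∃ N : Finset (Finset (Sym2 V)), (∀ p ∈ N, IsDisjointNoncrossingPair G f p) ∧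
      ∑ i ∈ L, mantelBound (Set.ncard {u | G.dist v u = i}) ≤ #N := by
  classical
  let I := L.sigma fun i => (crossingGraph G v x f i)ᶜ.edgeFinset
  refine ⟨I.biUnion (legWitnesses G v x f), fun p hp => ?_, ?_⟩
  · obtain ⟨⟨i, e⟩, hk, hp⟩ := mem_biUnion.mp hp
    exact hx.isDisjointNoncrossingPair_of_mem_legWitnesses huniq (hL _ (mem_sigma.mp hk).1) hp
  calc ∑ i ∈ L, mantelBound (Set.ncard {u | G.dist v u = i})
      = ∑ i ∈ L, mantelBound (Fintype.card {u // G.dist v u = i}) := by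
        simp only [← Nat.card_coe_set_eq, Nat.card_eq_fintype_card]; rfl
    _ ≤ ∑ i ∈ L, #(crossingGraph G v x f i)ᶜ.edgeFinset := sum_le_sum fun i hi =>
        (hx.crossingGraph_cliqueFree huniq hf (hL i hi)).mantelBound_le_card_edgeFinset_compl
    _ = #I := (card_sigma _ _).symm
    _ ≤ #(I.biUnion (legWitnesses G v x f)) :=
        card_le_card_biUnion ((hx.pairwise_disjoint_legWitnesses huniq).set_pairwise _)
          fun k hk => legWitnesses_nonempty (SimpleGraph.mem_edgeFinset.mp (mem_sigma.mp hk).2)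

end Witnesses

theorem spider_crossing_upper_bound_general (n h : ℕ) (S : SimpleGraph (Fin n))
    [DecidableRel S.Adj] (hS : S.IsTree) (v : Fin n)
    (huniq : ∀ u, 3 ≤ S.degree u → u = v)
    (a : ℕ → ℕ) (ha : ∀ i, 1 ≤ i → a i = Set.ncard {u : Fin n | S.dist v u = i})
    (f : Fin n → ℝ × ℝ) (hf : IsLegalDrawing S f) :
    (crossCount S f : ℤ) ≤
      (Nat.choose (n - 1) 2 : ℤ) - ∑ u : Fin n, (Nat.choose (S.degree u) 2 : ℤ) -
        ∑ i ∈ Finset.Icc 2 h,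
          ((Nat.choose (a i / 2) 2 : ℤ) + (Nat.choose ((a i + 1) / 2) 2 : ℤ)) := by
  obtain ⟨x, hx⟩ := hS.connected.exists_isGeodesicSystem v
  obtain ⟨N, hN, hcard⟩ :=
    hx.exists_disjointNoncrossingPairs huniq hf (Icc 2 h) fun i hi => (mem_Icc.mp hi).1
  have hcount := crossCount_add_sum_choose_degree_add_card_le N hN
  have hedges : #S.edgeFinset = n - 1 := by
    have := hS.card_edgeFinset
    rw [Fintype.card_fin] at this
    omega
  have hlevels : ∑ i ∈ Icc 2 h, mantelBound (a i) ≤ #N :=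
    (sum_congr rfl fun i hi => by rw [ha i (one_le_two.trans (mem_Icc.mp hi).1)]).trans_le hcard
  rw [hedges] at hcount
  have key : crossCount S f + ∑ u, (S.degree u).choose 2 + ∑ i ∈ Icc 2 h, mantelBound (a i)
      ≤ (n - 1).choose 2 := by omega
  have key' := (Nat.cast_le (α := ℤ)).mpr key
  push_cast [mantelBound] at key'
  linarith

/-- Let `S` be a spider on `n` vertices (a tree with a unique vertex `v` of
degree ≥ 3) of type `(a_1, …, a_h)`, i.e. `h = ecc(v)` and exactly `a i` vertices are at
distance `i` from `v` for each `i ≥ 1`. In every legal rectilinear drawing of `S`, the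
number of crossing pairs of edges is at most
`C(n-1, 2) − ∑_u C(d(u), 2) − ∑_{i=2}^{h} ( C(⌊a_i/2⌋, 2) + C(⌈a_i/2⌉, 2) )`. -/
theorem spider_crossing_upper_bound (n h : ℕ) (S : SimpleGraph (Fin n))
    [DecidableRel S.Adj] (hS : S.IsTree) (v : Fin n)
    (hdeg : 3 ≤ S.degree v) (huniq : ∀ u, 3 ≤ S.degree u → u = v)
    (a : ℕ → ℕ) (ha : ∀ i, 1 ≤ i → a i = Set.ncard {u : Fin n | S.dist v u = i})
    (hecc : ∀ u, S.dist v u ≤ h) (hecc' : ∃ u, S.dist v u = h)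
    (f : Fin n → ℝ × ℝ) (hf : IsLegalDrawing S f) :
    (crossCount S f : ℤ) ≤
      (Nat.choose (n - 1) 2 : ℤ) - ∑ u : Fin n, (Nat.choose (S.degree u) 2 : ℤ) -
        ∑ i ∈ Finset.Icc 2 h,
          ((Nat.choose (a i / 2) 2 : ℤ) + (Nat.choose ((a i + 1) / 2) 2 : ℤ)) :=
  spider_crossing_upper_bound_general n h S hS v huniq a ha f hf
end
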